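/- arXiv:1304.3316 — 4 statements merged into one kernel-verified Lean document; each statement's English description precedes it below -/
import Mathlib

section
/- Assume the random walk is non-singular and that M_x < 0 or M_y < 0. Then there exists a point (x,y) ∈ [0,1) × [0,1) at which Q, ∂Q/∂x and ∂Q/∂y all vanish if and only if p(0,1) = p(1,1) = p(1,0) = 0; moreover, any such point (x,y) is the origin (0,0). -/
open Finset MvPolynomial

/-- The index set `{-1, 0, 1}` for the jumps of the random walk. -/
def II : Finset ℤ := {-1, 0, 1}

/-- The kernel as an element of the polynomial ring `ℝ[x,y]`;
variable `0` is `x` and variable `1` is `y`. -/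
noncomputable def Qpoly (p : ℤ → ℤ → ℝ) : MvPolynomial (Fin 2) ℝ :=
  (∑ s ∈ II, ∑ t ∈ II, C (p s t) * X 0 ^ (1 - s).toNat * X 1 ^ (1 - t).toNat)
    - X 0 * X 1

/-- The random walk is non-singular if `Q` is irreducible in `ℝ[x,y]`
and of degree 2 in each of the two variables. -/
def Nonsingular (p : ℤ → ℤ → ℝ) : Prop :=
  Irreducible (Qpoly p) ∧ (Qpoly p).degreeOf 0 = 2 ∧ (Qpoly p).degreeOf 1 = 2

/-- Horizontal mean drift. -/
noncomputable def Mx (p : ℤ → ℤ → ℝ) : ℝ := ∑ t ∈ II, (p 1 t - p (-1) t)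

/-- Vertical mean drift. -/
noncomputable def My (p : ℤ → ℤ → ℝ) : ℝ := ∑ s ∈ II, (p s 1 - p s (-1))


set_option maxHeartbeats 1600000


lemma cell_eq {P w : ℝ} (hP : 0 ≤ P) (hw : 0 < w) (h : P * (w - 1 - Real.log w) = 0) :
    P * w = P := by
  rcases eq_or_lt_of_le hP with h0 | hpos
  · rw [← h0]; ring
  · rcases eq_or_ne w 1 with h1 | h1
    · rw [h1]; ring
    · have hlt : Real.log w < w - 1 := Real.log_lt_sub_one_of_pos hw h1
      nlinarith

lemma core (a b c d e f g h i x y : ℝ)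
    (ha : 0 ≤ a) (hb : 0 ≤ b) (hc : 0 ≤ c) (hd : 0 ≤ d) (he : 0 ≤ e) (hf : 0 ≤ f)
    (hg : 0 ≤ g) (hh : 0 ≤ h) (hi : 0 ≤ i)
    (hx : 0 < x) (hy : 0 < y)
    (hsum : a + b + c + d + e + f + g + h + i = 1)
    (hQ : a*(x^2*y^2) + b*(x^2*y) + c*x^2 + d*(x*y^2) + e*(x*y) + f*x
        + g*y^2 + h*y + i - x*y = 0)
    (hQx : 2*a*(x*y^2) + 2*b*(x*y) + 2*c*x + d*y^2 + e*y + f - y = 0)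
    (hQy : 2*a*(x^2*y) + b*x^2 + 2*d*(x*y) + e*x + 2*g*y + h - x = 0) :
    (g + h + i) - (a + b + c) = 0 ∧ (c + f + i) - (a + d + g) = 0 := by
  have hx' := hx.ne'
  have hy' := hy.ne'
  obtain ⟨u, hu⟩ : ∃ r : ℝ, r = Real.log x := ⟨_, rfl⟩
  obtain ⟨v, hv⟩ : ∃ r : ℝ, r = Real.log y := ⟨_, rfl⟩
  obtain ⟨P₁, hP₁d⟩ : ∃ r : ℝ, r = a*(x^2*y^2) := ⟨_, rfl⟩
  obtain ⟨P₂, hP₂d⟩ : ∃ r : ℝ, r = b*(x^2*y) := ⟨_, rfl⟩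
  obtain ⟨P₃, hP₃d⟩ : ∃ r : ℝ, r = c*x^2 := ⟨_, rfl⟩
  obtain ⟨P₄, hP₄d⟩ : ∃ r : ℝ, r = d*(x*y^2) := ⟨_, rfl⟩
  obtain ⟨P₅, hP₅d⟩ : ∃ r : ℝ, r = e*(x*y) := ⟨_, rfl⟩
  obtain ⟨P₆, hP₆d⟩ : ∃ r : ℝ, r = f*x := ⟨_, rfl⟩
  obtain ⟨P₇, hP₇d⟩ : ∃ r : ℝ, r = g*y^2 := ⟨_, rfl⟩
  obtain ⟨P₈, hP₈d⟩ : ∃ r : ℝ, r = h*y := ⟨_, rfl⟩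
  obtain ⟨P₉, hP₉d⟩ : ∃ r : ℝ, r = i := ⟨_, rfl⟩
  obtain ⟨w₁, hw₁d⟩ : ∃ r : ℝ, r = (x*y)⁻¹ := ⟨_, rfl⟩
  obtain ⟨w₂, hw₂d⟩ : ∃ r : ℝ, r = x⁻¹ := ⟨_, rfl⟩
  obtain ⟨w₃, hw₃d⟩ : ∃ r : ℝ, r = y/x := ⟨_, rfl⟩
  obtain ⟨w₄, hw₄d⟩ : ∃ r : ℝ, r = y⁻¹ := ⟨_, rfl⟩
  obtain ⟨w₅, hw₅d⟩ : ∃ r : ℝ, r = (1:ℝ) := ⟨_, rfl⟩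
  obtain ⟨w₆, hw₆d⟩ : ∃ r : ℝ, r = y := ⟨_, rfl⟩
  obtain ⟨w₇, hw₇d⟩ : ∃ r : ℝ, r = x/y := ⟨_, rfl⟩
  obtain ⟨w₈, hw₈d⟩ : ∃ r : ℝ, r = x := ⟨_, rfl⟩
  obtain ⟨w₉, hw₉d⟩ : ∃ r : ℝ, r = x*y := ⟨_, rfl⟩
  have hS1 : P₁+P₂+P₃+P₄+P₅+P₆+P₇+P₈+P₉ = x*y := by
    rw [hP₁d, hP₂d, hP₃d, hP₄d, hP₅d, hP₆d, hP₇d, hP₈d, hP₉d]; linarith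
  have hSx : 2*(P₁+P₂+P₃) + (P₄+P₅+P₆) = x*y := by
    rw [hP₁d, hP₂d, hP₃d, hP₄d, hP₅d, hP₆d]; linear_combination x * hQx
  have hSy : 2*(P₁+P₄+P₇) + (P₂+P₅+P₈) = x*y := by
    rw [hP₁d, hP₂d, hP₄d, hP₅d, hP₇d, hP₈d]; linear_combination y * hQy
  have hs : (P₁+P₂+P₃) - (P₇+P₈+P₉) = 0 := by linarith
  have ht : (P₁+P₄+P₇) - (P₃+P₆+P₉) = 0 := by linarith
  have c₁ : P₁*w₁ = a*(x*y) := by rw [hP₁d, hw₁d]; field_simp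
  have c₂ : P₂*w₂ = b*(x*y) := by rw [hP₂d, hw₂d]; field_simp
  have c₃ : P₃*w₃ = c*(x*y) := by rw [hP₃d, hw₃d]; field_simp
  have c₄ : P₄*w₄ = d*(x*y) := by rw [hP₄d, hw₄d]; field_simp
  have c₅ : P₅*w₅ = e*(x*y) := by rw [hP₅d, hw₅d]; try ring
  have c₆ : P₆*w₆ = f*(x*y) := by rw [hP₆d, hw₆d]; try ring
  have c₇ : P₇*w₇ = g*(x*y) := by rw [hP₇d, hw₇d]; field_simp
  have c₈ : P₈*w₈ = h*(x*y) := by rw [hP₈d, hw₈d]; try ring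
  have c₉ : P₉*w₉ = i*(x*y) := by rw [hP₉d, hw₉d]
  have hSw : P₁*w₁+P₂*w₂+P₃*w₃+P₄*w₄+P₅*w₅+P₆*w₆+P₇*w₇+P₈*w₈+P₉*w₉ = x*y := by
    rw [c₁, c₂, c₃, c₄, c₅, c₆, c₇, c₈, c₉]; linear_combination (x*y) * hsum
  have hl₁ : Real.log w₁ = -u - v := by
    rw [hw₁d, Real.log_inv, Real.log_mul hx' hy', hu, hv]; ring
  have hl₂ : Real.log w₂ = -u := by rw [hw₂d, Real.log_inv, hu]
  have hl₃ : Real.log w₃ = v - u := by rw [hw₃d, Real.log_div hy' hx', hu, hv]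
  have hl₄ : Real.log w₄ = -v := by rw [hw₄d, Real.log_inv, hv]
  have hl₅ : Real.log w₅ = 0 := by rw [hw₅d, Real.log_one]
  have hl₆ : Real.log w₆ = v := by rw [hw₆d, hv]
  have hl₇ : Real.log w₇ = u - v := by rw [hw₇d, Real.log_div hx' hy', hu, hv]
  have hl₈ : Real.log w₈ = u := by rw [hw₈d, hu]
  have hl₉ : Real.log w₉ = u + v := by rw [hw₉d, Real.log_mul hx' hy', hu, hv]
  have hPp₁ : 0 ≤ P₁ := by rw [hP₁d]; positivity
  have hPp₂ : 0 ≤ P₂ := by rw [hP₂d]; positivity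
  have hPp₃ : 0 ≤ P₃ := by rw [hP₃d]; positivity
  have hPp₄ : 0 ≤ P₄ := by rw [hP₄d]; positivity
  have hPp₅ : 0 ≤ P₅ := by rw [hP₅d]; positivity
  have hPp₆ : 0 ≤ P₆ := by rw [hP₆d]; positivity
  have hPp₇ : 0 ≤ P₇ := by rw [hP₇d]; positivity
  have hPp₈ : 0 ≤ P₈ := by rw [hP₈d]; positivity
  have hPp₉ : 0 ≤ P₉ := by rw [hP₉d]; exact hi
  have hwp₁ : 0 < w₁ := by rw [hw₁d]; positivity
  have hwp₂ : 0 < w₂ := by rw [hw₂d]; positivity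
  have hwp₃ : 0 < w₃ := by rw [hw₃d]; positivity
  have hwp₄ : 0 < w₄ := by rw [hw₄d]; positivity
  have hwp₅ : 0 < w₅ := by rw [hw₅d]; exact one_pos
  have hwp₆ : 0 < w₆ := by rw [hw₆d]; exact hy
  have hwp₇ : 0 < w₇ := by rw [hw₇d]; positivity
  have hwp₈ : 0 < w₈ := by rw [hw₈d]; exact hx
  have hwp₉ : 0 < w₉ := by rw [hw₉d]; positivity
  have k₁ : 0 ≤ P₁*(w₁ - 1 - Real.log w₁) :=
    mul_nonneg hPp₁ (by have := Real.log_le_sub_one_of_pos hwp₁; linarith)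
  have k₂ : 0 ≤ P₂*(w₂ - 1 - Real.log w₂) :=
    mul_nonneg hPp₂ (by have := Real.log_le_sub_one_of_pos hwp₂; linarith)
  have k₃ : 0 ≤ P₃*(w₃ - 1 - Real.log w₃) :=
    mul_nonneg hPp₃ (by have := Real.log_le_sub_one_of_pos hwp₃; linarith)
  have k₄ : 0 ≤ P₄*(w₄ - 1 - Real.log w₄) :=
    mul_nonneg hPp₄ (by have := Real.log_le_sub_one_of_pos hwp₄; linarith)
  have k₅ : 0 ≤ P₅*(w₅ - 1 - Real.log w₅) :=
    mul_nonneg hPp₅ (by have := Real.log_le_sub_one_of_pos hwp₅; linarith)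
  have k₆ : 0 ≤ P₆*(w₆ - 1 - Real.log w₆) :=
    mul_nonneg hPp₆ (by have := Real.log_le_sub_one_of_pos hwp₆; linarith)
  have k₇ : 0 ≤ P₇*(w₇ - 1 - Real.log w₇) :=
    mul_nonneg hPp₇ (by have := Real.log_le_sub_one_of_pos hwp₇; linarith)
  have k₈ : 0 ≤ P₈*(w₈ - 1 - Real.log w₈) :=
    mul_nonneg hPp₈ (by have := Real.log_le_sub_one_of_pos hwp₈; linarith)
  have k₉ : 0 ≤ P₉*(w₉ - 1 - Real.log w₉) :=
    mul_nonneg hPp₉ (by have := Real.log_le_sub_one_of_pos hwp₉; linarith)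
  have total : P₁*(w₁ - 1 - Real.log w₁) + P₂*(w₂ - 1 - Real.log w₂)
      + P₃*(w₃ - 1 - Real.log w₃) + P₄*(w₄ - 1 - Real.log w₄)
      + P₅*(w₅ - 1 - Real.log w₅) + P₆*(w₆ - 1 - Real.log w₆)
      + P₇*(w₇ - 1 - Real.log w₇) + P₈*(w₈ - 1 - Real.log w₈)
      + P₉*(w₉ - 1 - Real.log w₉) = 0 := by
    rw [hl₁, hl₂, hl₃, hl₄, hl₅, hl₆, hl₇, hl₈, hl₉]
    linear_combination hSw - hS1 + u * hs + v * ht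
  have pw₁ : P₁*w₁ = P₁ := cell_eq hPp₁ hwp₁ (by linarith)
  have pw₂ : P₂*w₂ = P₂ := cell_eq hPp₂ hwp₂ (by linarith)
  have pw₃ : P₃*w₃ = P₃ := cell_eq hPp₃ hwp₃ (by linarith)
  have pw₄ : P₄*w₄ = P₄ := cell_eq hPp₄ hwp₄ (by linarith)
  have pw₅ : P₅*w₅ = P₅ := cell_eq hPp₅ hwp₅ (by linarith)
  have pw₆ : P₆*w₆ = P₆ := cell_eq hPp₆ hwp₆ (by linarith)
  have pw₇ : P₇*w₇ = P₇ := cell_eq hPp₇ hwp₇ (by linarith)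
  have pw₈ : P₈*w₈ = P₈ := cell_eq hPp₈ hwp₈ (by linarith)
  have pw₉ : P₉*w₉ = P₉ := cell_eq hPp₉ hwp₉ (by linarith)
  have hxy : (0:ℝ) < x*y := by positivity
  constructor
  · have key : ((g + h + i) - (a + b + c)) * (x*y) = 0 := by
      linear_combination (pw₇ + pw₈ + pw₉) - (c₇ + c₈ + c₉) + (c₁ + c₂ + c₃)
        - (pw₁ + pw₂ + pw₃) - hs
    rcases mul_eq_zero.mp key with h0 | h0
    · exact h0
    · exact absurd h0 hxy.ne'
  · have key : ((c + f + i) - (a + d + g)) * (x*y) = 0 := by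
      linear_combination (pw₃ + pw₆ + pw₉) - (c₃ + c₆ + c₉) + (c₁ + c₄ + c₇)
        - (pw₁ + pw₄ + pw₇) - ht
    rcases mul_eq_zero.mp key with h0 | h0
    · exact h0
    · exact absurd h0 hxy.ne'

lemma Qpoly_eq (p : ℤ → ℤ → ℝ) : Qpoly p =
    C (p (-1) (-1)) * X 0 ^ 2 * X 1 ^ 2 + C (p (-1) 0) * X 0 ^ 2 * X 1 + C (p (-1) 1) * X 0 ^ 2
    + C (p 0 (-1)) * X 0 * X 1 ^ 2 + C (p 0 0) * X 0 * X 1 + C (p 0 1) * X 0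
    + C (p 1 (-1)) * X 1 ^ 2 + C (p 1 0) * X 1 + C (p 1 1) - X 0 * X 1 := by
  simp [Qpoly, II, Finset.sum_insert, Finset.mem_insert]
  ring

lemma eval_Q (p : ℤ → ℤ → ℝ) (x y : ℝ) : eval ![x, y] (Qpoly p) =
    p (-1) (-1) * (x^2*y^2) + p (-1) 0 * (x^2*y) + p (-1) 1 * x^2
    + p 0 (-1) * (x*y^2) + p 0 0 * (x*y) + p 0 1 * x
    + p 1 (-1) * y^2 + p 1 0 * y + p 1 1 - x*y := by
  rw [Qpoly_eq]; simp; ring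

lemma pderiv0_Q (p : ℤ → ℤ → ℝ) (x y : ℝ) : eval ![x, y] (pderiv 0 (Qpoly p)) =
    2 * p (-1) (-1) * (x*y^2) + 2 * p (-1) 0 * (x*y) + 2 * p (-1) 1 * x
    + p 0 (-1) * y^2 + p 0 0 * y + p 0 1 - y := by
  rw [Qpoly_eq]
  simp [pderiv_mul, pderiv_X_self, pderiv_X_of_ne]
  ring

lemma pderiv1_Q (p : ℤ → ℤ → ℝ) (x y : ℝ) : eval ![x, y] (pderiv 1 (Qpoly p)) =
    2 * p (-1) (-1) * (x^2*y) + p (-1) 0 * x^2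
    + 2 * p 0 (-1) * (x*y) + p 0 0 * x
    + 2 * p 1 (-1) * y + p 1 0 - x := by
  rw [Qpoly_eq]
  simp [pderiv_mul, pderiv_X_self, pderiv_X_of_ne]
  ring

lemma notunit_X (j : Fin 2) : ¬ IsUnit (X j : MvPolynomial (Fin 2) ℝ) := by
  intro hu
  have h2 := hu.map (eval (fun _ => (0:ℝ)))
  simp at h2

/-- `Q` has a singular point in `[0,1) × [0,1)` iff `p(0,1) = p(1,1) = p(1,0) = 0`,
and any such singular point is the origin. -/
theorem stmt6 (p : ℤ → ℤ → ℝ)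
    (hp : ∀ s ∈ II, ∀ t ∈ II, 0 ≤ p s t)
    (hp1 : ∑ s ∈ II, ∑ t ∈ II, p s t = 1)
    (hns : Nonsingular p)
    (hdrift : Mx p < 0 ∨ My p < 0) :
    ((∃ x y : ℝ, x ∈ Set.Ico (0 : ℝ) 1 ∧ y ∈ Set.Ico (0 : ℝ) 1 ∧
        eval ![x, y] (Qpoly p) = 0 ∧
        eval ![x, y] (pderiv 0 (Qpoly p)) = 0 ∧
        eval ![x, y] (pderiv 1 (Qpoly p)) = 0) ↔
      (p 0 1 = 0 ∧ p 1 1 = 0 ∧ p 1 0 = 0)) ∧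
    (∀ x y : ℝ, x ∈ Set.Ico (0 : ℝ) 1 → y ∈ Set.Ico (0 : ℝ) 1 →
      eval ![x, y] (Qpoly p) = 0 →
      eval ![x, y] (pderiv 0 (Qpoly p)) = 0 →
      eval ![x, y] (pderiv 1 (Qpoly p)) = 0 →
      x = 0 ∧ y = 0) := by
  have m1 : (-1 : ℤ) ∈ II := by decide
  have m0 : (0 : ℤ) ∈ II := by decide
  have mp1 : (1 : ℤ) ∈ II := by decide
  have hA := hp (-1) m1 (-1) m1
  have hB := hp (-1) m1 0 m0
  have hC := hp (-1) m1 1 mp1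
  have hD := hp 0 m0 (-1) m1
  have hE := hp 0 m0 0 m0
  have hF := hp 0 m0 1 mp1
  have hG := hp 1 mp1 (-1) m1
  have hH := hp 1 mp1 0 m0
  have hI := hp 1 mp1 1 mp1
  have hsum : p (-1) (-1) + p (-1) 0 + p (-1) 1 + p 0 (-1) + p 0 0 + p 0 1
      + p 1 (-1) + p 1 0 + p 1 1 = 1 := by
    simp [II] at hp1; linarith
  have hMx : Mx p = (p 1 (-1) + p 1 0 + p 1 1) - (p (-1) (-1) + p (-1) 0 + p (-1) 1) := by
    simp [Mx, II]; ring
  have hMy : My p = (p (-1) 1 + p 0 1 + p 1 1) - (p (-1) (-1) + p 0 (-1) + p 1 (-1)) := by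
    simp [My, II]; ring
  have main2 : ∀ x y : ℝ, x ∈ Set.Ico (0 : ℝ) 1 → y ∈ Set.Ico (0 : ℝ) 1 →
      eval ![x, y] (Qpoly p) = 0 →
      eval ![x, y] (pderiv 0 (Qpoly p)) = 0 →
      eval ![x, y] (pderiv 1 (Qpoly p)) = 0 →
      x = 0 ∧ y = 0 := by
    intro x y hx hy hQ hQx hQy
    rw [eval_Q] at hQ
    rw [pderiv0_Q] at hQx
    rw [pderiv1_Q] at hQy
    obtain ⟨hx0, hx1⟩ := hx
    obtain ⟨hy0, hy1⟩ := hy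
    rcases eq_or_lt_of_le hx0 with hxz | hxpos
    · rcases eq_or_lt_of_le hy0 with hyz | hypos
      · exact ⟨hxz.symm, hyz.symm⟩
      · -- x = 0, y > 0 : the column p 1 · vanishes, X 0 divides Qpoly
        exfalso
        rw [← hxz] at hQ hQx
        have hyy : (0:ℝ) < y^2 := by positivity
        have t1 : 0 ≤ p 1 (-1) * y^2 := mul_nonneg hG hyy.le
        have t2 : 0 ≤ p 1 0 * y := mul_nonneg hH hypos.le
        have e1 : p 1 (-1) * y^2 = 0 := by nlinarith
        have e2 : p 1 0 * y = 0 := by nlinarith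
        have e3 : p 1 1 = 0 := by nlinarith
        have hg0 : p 1 (-1) = 0 := by
          rcases mul_eq_zero.mp e1 with h | h
          · exact h
          · exact absurd h hyy.ne'
        have hh0 : p 1 0 = 0 := by
          rcases mul_eq_zero.mp e2 with h | h
          · exact h
          · exact absurd h hypos.ne'
        obtain ⟨R, hR⟩ : ∃ R : MvPolynomial (Fin 2) ℝ,
            R = C (p (-1) (-1)) * X 0 * X 1 ^ 2 + C (p (-1) 0) * X 0 * X 1
              + C (p (-1) 1) * X 0 + C (p 0 (-1)) * X 1 ^ 2 + C (p 0 0) * X 1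
              + C (p 0 1) - X 1 := ⟨_, rfl⟩
        have hfac : Qpoly p = X 0 * R := by
          rw [Qpoly_eq, hg0, hh0, e3, hR]
          simp only [map_zero, zero_mul, add_zero, zero_add]
          ring
        rcases hns.1.isUnit_or_isUnit hfac with hu | hu
        · exact notunit_X 0 hu
        · have h2 := hu.map (eval ![(0:ℝ), y])
          have hRz : eval ![(0:ℝ), y] R = 0 := by
            rw [hR]; simp; nlinarith
          rw [hRz] at h2
          simp at h2
    · rcases eq_or_lt_of_le hy0 with hyz | hypos
      · -- y = 0, x > 0 : the column p · 1 vanishes, X 1 divides Qpoly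
        exfalso
        rw [← hyz] at hQ hQy
        have hxx : (0:ℝ) < x^2 := by positivity
        have t1 : 0 ≤ p (-1) 1 * x^2 := mul_nonneg hC hxx.le
        have t2 : 0 ≤ p 0 1 * x := mul_nonneg hF hxpos.le
        have e1 : p (-1) 1 * x^2 = 0 := by nlinarith
        have e2 : p 0 1 * x = 0 := by nlinarith
        have e3 : p 1 1 = 0 := by nlinarith
        have hc0 : p (-1) 1 = 0 := by
          rcases mul_eq_zero.mp e1 with h | h
          · exact h
          · exact absurd h hxx.ne'
        have hf0 : p 0 1 = 0 := by
          rcases mul_eq_zero.mp e2 with h | h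
          · exact h
          · exact absurd h hxpos.ne'
        obtain ⟨R, hR⟩ : ∃ R : MvPolynomial (Fin 2) ℝ,
            R = C (p (-1) (-1)) * X 0 ^ 2 * X 1 + C (p (-1) 0) * X 0 ^ 2
              + C (p 0 (-1)) * X 0 * X 1 + C (p 0 0) * X 0 + C (p 1 (-1)) * X 1
              + C (p 1 0) - X 0 := ⟨_, rfl⟩
        have hfac : Qpoly p = X 1 * R := by
          rw [Qpoly_eq, hc0, hf0, e3, hR]
          simp only [map_zero, zero_mul, add_zero, zero_add]
          ring
        rcases hns.1.isUnit_or_isUnit hfac with hu | hu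
        · exact notunit_X 1 hu
        · have h2 := hu.map (eval ![x, (0:ℝ)])
          have hRz : eval ![x, (0:ℝ)] R = 0 := by
            rw [hR]; simp; nlinarith
          rw [hRz] at h2
          simp at h2
      · -- interior: drifts vanish, contradiction
        exfalso
        obtain ⟨k1, k2⟩ := core (p (-1) (-1)) (p (-1) 0) (p (-1) 1) (p 0 (-1)) (p 0 0)
          (p 0 1) (p 1 (-1)) (p 1 0) (p 1 1) x y hA hB hC hD hE hF hG hH hI
          hxpos hypos hsum hQ hQx hQy
        rcases hdrift with hd | hd
        · rw [hMx] at hd; linarith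
        · rw [hMy] at hd; linarith
  refine ⟨⟨?_, ?_⟩, main2⟩
  · rintro ⟨x, y, hx, hy, hQ, hQx, hQy⟩
    obtain ⟨hx0, hy0⟩ := main2 x y hx hy hQ hQx hQy
    subst hx0; subst hy0
    rw [eval_Q] at hQ
    rw [pderiv0_Q] at hQx
    rw [pderiv1_Q] at hQy
    norm_num at hQ hQx hQy
    exact ⟨hQx, hQ, hQy⟩
  · rintro ⟨h1, h2, h3⟩
    refine ⟨0, 0, ⟨le_refl 0, one_pos⟩, ⟨le_refl 0, one_pos⟩, ?_, ?_, ?_⟩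
    · rw [eval_Q]; norm_num [h2]
    · rw [pderiv0_Q]; norm_num [h1]
    · rw [pderiv1_Q]; norm_num [h3]
end

section
/- Suppose Γ satisfies the separation condition and the induced measure m satisfies the interior balance equations. Then every (ρ,σ) ∈ Γ satisfies Q(ρ,σ) = 0. -/
open Finset

/-- The kernel `Q(x,y) = ∑_{s,t ∈ {-1,0,1}} p(s,t) x^{1-s} y^{1-t} − x y`. -/
noncomputable def Qf (p : ℤ → ℤ → ℝ) (x y : ℝ) : ℝ :=
  (∑ s ∈ II, ∑ t ∈ II, p s t * x ^ (1 - s).toNat * y ^ (1 - t).toNat) - x * y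

/-- The measure on `ℕ × ℕ` induced by the set of geometric terms `Γ`
with coefficients `α`. -/
noncomputable def inducedMeasure (Γ : Set (ℝ × ℝ)) (α : ℝ × ℝ → ℝ) (i j : ℕ) : ℝ :=
  ∑' q : Γ, α q * (q : ℝ × ℝ).1 ^ i * (q : ℝ × ℝ).2 ^ j

/-- The absolute-convergence assumption on the coefficients. -/
def AbsConv (Γ : Set (ℝ × ℝ)) (α : ℝ × ℝ → ℝ) : Prop :=
  Summable (fun q : Γ => |α q| * (1 - (q : ℝ × ℝ).1)⁻¹ * (1 - (q : ℝ × ℝ).2)⁻¹)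

/-- The separation condition on `Γ`. -/
def Separation (Γ : Set (ℝ × ℝ)) : Prop :=
  ∀ q ∈ Γ, ∃ w v : ℕ, 0 < w ∧ 0 < v ∧
    ∀ q' ∈ Γ, q' ≠ q → q'.1 ^ w * q'.2 ^ v ≠ q.1 ^ w * q.2 ^ v

/-- The interior balance equations for a measure `m` on `ℕ × ℕ`. -/
def InteriorBalance (p : ℤ → ℤ → ℝ) (m : ℕ → ℕ → ℝ) : Prop :=
  ∀ i j : ℕ, 1 ≤ i → 1 ≤ j →
    m i j = ∑ s ∈ II, ∑ t ∈ II, m ((i : ℤ) - s).toNat ((j : ℤ) - t).toNat * p s t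

/-!
Put `β q = α q * Q q`. The balance equation at `(i + 1, j + 1)` says exactly that
`∑ q, β q * q.1 ^ i * q.2 ^ j = 0`: every moment of the discrete signed measure `∑ q, β q • δ q`
on the unit square vanishes. By Stone–Weierstrass the polynomials are dense in the continuous
functions on the square, so this measure integrates every continuous function to zero. Testing it
against an Urysohn function equal to `1` at `q` and to `0` at finitely many other atoms carrying all
but `ε` of the total mass gives `|β q| ≤ ε`, so `β q = 0`, and `Q q = 0` since `α q ≠ 0`.
-/

open Filter Function

section DiscreteIntegral

variable {ι X : Type*} [TopologicalSpace X] [CompactSpace X] {β : ι → ℝ}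

theorem summable_mul_apply (hβ : Summable fun i => ‖β i‖) (e : ι → X) (f : C(X, ℝ)) :
    Summable fun i => β i * f (e i) :=
  (hβ.mul_right ‖f‖).of_norm_bounded fun i => by
    rw [norm_mul]
    exact mul_le_mul_of_nonneg_left (f.norm_coe_le_norm (e i)) (norm_nonneg _)

noncomputable def discreteIntegral (hβ : Summable fun i => ‖β i‖) (e : ι → X) :
    C(X, ℝ) →L[ℝ] ℝ :=
  LinearMap.mkContinuous
    { toFun := fun f => ∑' i, β i * f (e i)
      map_add' := fun f g => by
        simp only [ContinuousMap.add_apply, mul_add]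
        exact (summable_mul_apply hβ e f).tsum_add (summable_mul_apply hβ e g)
      map_smul' := fun c f => by
        simp only [ContinuousMap.smul_apply, smul_eq_mul, RingHom.id_apply, mul_left_comm _ c]
        exact tsum_mul_left }
    (∑' i, ‖β i‖) fun f => by
      rw [← tsum_mul_right]
      refine tsum_of_norm_bounded (hβ.mul_right ‖f‖).hasSum fun i => ?_
      rw [norm_mul]
      exact mul_le_mul_of_nonneg_left (f.norm_coe_le_norm (e i)) (norm_nonneg _)

theorem discreteIntegral_apply (hβ : Summable fun i => ‖β i‖) (e : ι → X) (f : C(X, ℝ)) :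
    discreteIntegral hβ e f = ∑' i, β i * f (e i) :=
  rfl

theorem discreteIntegral_mul_left (hβ : Summable fun i => ‖β i‖) (e : ι → X) (g : C(X, ℝ))
    (hβg : Summable fun i => ‖β i * g (e i)‖) (f : C(X, ℝ)) :
    discreteIntegral hβg e f = discreteIntegral hβ e (g * f) := by
  simp only [discreteIntegral_apply, ContinuousMap.mul_apply, mul_assoc]

variable [T2Space X] {e : ι → X}

theorem norm_le_tsum_compl_of_discreteIntegral_eq_zero (hβ : Summable fun i => ‖β i‖)
    (he : Injective e) (h : discreteIntegral hβ e = 0) {i₀ : ι} {s : Finset ι} (hs : i₀ ∈ s) :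
    ‖β i₀‖ ≤ ∑' i : {i // i ∉ s}, ‖β i‖ := by
  classical
  have hdisj : Disjoint (e '' (s.erase i₀)) {e i₀} := by
    rw [Set.disjoint_singleton_right]
    rintro ⟨i, hi, hei⟩
    exact (Finset.mem_erase.mp hi).1 (he hei)
  obtain ⟨f, hf0, hf1, hf01⟩ := exists_continuous_zero_one_of_isClosed
    ((s.erase i₀).finite_toSet.image e).isClosed isClosed_singleton hdisj
  have hs_sum : ∑ i ∈ s, β i * f (e i) = β i₀ := by
    rw [Finset.sum_eq_single_of_mem i₀ hs fun i hi hne =>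
      by rw [hf0 ⟨i, Finset.mem_erase.mpr ⟨hne, hi⟩, rfl⟩, Pi.zero_apply, mul_zero],
      hf1 rfl, Pi.one_apply, mul_one]
  have hsplit := (summable_mul_apply hβ e f).sum_add_tsum_subtype_compl s
  rw [hs_sum, ← discreteIntegral_apply hβ, h, zero_apply,
    add_eq_zero_iff_eq_neg] at hsplit
  rw [hsplit, norm_neg]
  refine tsum_of_norm_bounded (hβ.subtype _).hasSum fun i => ?_
  rw [norm_mul]
  refine mul_le_of_le_one_right (norm_nonneg _) ?_
  rw [Real.norm_of_nonneg (hf01 _).1]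
  exact (hf01 _).2

theorem eq_zero_of_discreteIntegral_eq_zero (hβ : Summable fun i => ‖β i‖)
    (he : Injective e) (h : discreteIntegral hβ e = 0) (i₀ : ι) : β i₀ = 0 :=
  norm_le_zero_iff.mp <| ge_of_tendsto (tendsto_tsum_compl_atTop_zero fun i => ‖β i‖) <|
    (eventually_ge_atTop {i₀}).mono fun _ hs =>
      norm_le_tsum_compl_of_discreteIntegral_eq_zero hβ he h (hs (Finset.mem_singleton_self _))

end DiscreteIntegral

section Moments

variable {ι : Type*} {K : Set (ℝ × ℝ)}

def coordFst (K : Set (ℝ × ℝ)) : C(K, ℝ) := ContinuousMap.fst.restrict K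

def coordSnd (K : Set (ℝ × ℝ)) : C(K, ℝ) := ContinuousMap.snd.restrict K

theorem dense_span_submonoidClosure_coords [CompactSpace K] :
    Dense (Submodule.span ℝ (Submonoid.closure {coordFst K, coordSnd K} : Set C(K, ℝ)) :
      Set C(K, ℝ)) := by
  rw [← Algebra.adjoin_eq_span, Subalgebra.coe_toSubmodule, ← dense_closure,
    ← Subalgebra.topologicalClosure_coe,
    ContinuousMap.subalgebra_topologicalClosure_eq_top_of_separatesPoints]
  · exact dense_univ
  rintro x y hxy
  by_cases h₁ : x.1.1 = y.1.1
  · exact ⟨coordSnd K, ⟨_, Algebra.subset_adjoin (by simp), rfl⟩,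
      fun h₂ => hxy (Subtype.ext (Prod.ext h₁ h₂))⟩
  · exact ⟨coordFst K, ⟨_, Algebra.subset_adjoin (by simp), rfl⟩, h₁⟩

theorem discreteIntegral_eq_zero_of_moments_eq_zero [CompactSpace K] {β : ι → ℝ}
    (hβ : Summable fun i => ‖β i‖) {e : ι → K}
    (h : ∀ m n : ℕ, discreteIntegral hβ e (coordFst K ^ m * coordSnd K ^ n) = 0) :
    discreteIntegral hβ e = 0 := by
  refine ContinuousLinearMap.ext_on dense_span_submonoidClosure_coords fun f hf => ?_
  obtain ⟨m, n, rfl⟩ := (Submonoid.mem_closure_pair _ _ _).mp hf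
  exact h m n

end Moments

section InteriorBalance

variable {Γ : Set (ℝ × ℝ)} {α : ℝ × ℝ → ℝ}

theorem summable_norm_of_absConv (hΓ : Γ ⊆ Set.Ico 0 1 ×ˢ Set.Ico 0 1) (h : AbsConv Γ α) :
    Summable fun q : Γ => ‖α q‖ :=
  h.of_nonneg_of_le (fun _ => norm_nonneg _) fun q => by
    obtain ⟨⟨hx₀, hx₁⟩, hy₀, hy₁⟩ := hΓ q.2
    have hx : 1 ≤ (1 - (q : ℝ × ℝ).1)⁻¹ := (one_le_inv₀ (by linarith)).mpr (by linarith)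
    have hy : 1 ≤ (1 - (q : ℝ × ℝ).2)⁻¹ := (one_le_inv₀ (by linarith)).mpr (by linarith)
    calc ‖α q‖ = |α q| * 1 * 1 := by rw [Real.norm_eq_abs, mul_one, mul_one]
      _ ≤ _ := by gcongr

variable {K : Set (ℝ × ℝ)}

noncomputable def kernelMap (p : ℤ → ℤ → ℝ) (K : Set (ℝ × ℝ)) : C(K, ℝ) :=
  ⟨fun x => Qf p x.1.1 x.1.2, by unfold Qf; fun_prop⟩

theorem toNat_succ_sub_of_mem_II {s : ℤ} (hs : s ∈ II) (n : ℕ) :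
    (((n + 1 : ℕ) : ℤ) - s).toNat = n + (1 - s).toNat := by
  simp only [II, Finset.mem_insert, Finset.mem_singleton] at hs
  rcases hs with rfl | rfl | rfl <;> omega

theorem kernelMap_mul_monomial (p : ℤ → ℤ → ℝ) (i j : ℕ) :
    kernelMap p K * (coordFst K ^ i * coordSnd K ^ j) =
      ∑ s ∈ II, ∑ t ∈ II, p s t • (coordFst K ^ (((i + 1 : ℕ) : ℤ) - s).toNat *
        coordSnd K ^ (((j + 1 : ℕ) : ℤ) - t).toNat) -
      coordFst K ^ (i + 1) * coordSnd K ^ (j + 1) := by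
  ext x
  simp only [kernelMap, Qf, coordFst, coordSnd, ContinuousMap.mul_apply, ContinuousMap.sub_apply,
    ContinuousMap.coe_sum, Finset.sum_apply, ContinuousMap.smul_apply, ContinuousMap.pow_apply,
    ContinuousMap.coe_mk, ContinuousMap.restrict_apply, ContinuousMap.fst_apply,
    ContinuousMap.snd_apply, smul_eq_mul]
  rw [sub_mul, Finset.sum_mul]
  congr 1
  · refine Finset.sum_congr rfl fun s hs => ?_
    rw [Finset.sum_mul]
    refine Finset.sum_congr rfl fun t ht => ?_
    rw [toNat_succ_sub_of_mem_II hs, toNat_succ_sub_of_mem_II ht]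
    ring
  · ring

variable [CompactSpace K]

theorem inducedMeasure_eq_discreteIntegral (hα : Summable fun q : Γ => ‖α q‖) (hΓK : Γ ⊆ K)
    (i j : ℕ) :
    inducedMeasure Γ α i j =
      discreteIntegral hα (Set.inclusion hΓK) (coordFst K ^ i * coordSnd K ^ j) := by
  simp [inducedMeasure, discreteIntegral_apply, coordFst, coordSnd, mul_assoc]

theorem discreteIntegral_kernelMap_mul_monomial_eq_zero {p : ℤ → ℤ → ℝ}
    (hα : Summable fun q : Γ => ‖α q‖) (hΓK : Γ ⊆ K)
    (hbal : InteriorBalance p (inducedMeasure Γ α)) (i j : ℕ) :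
    discreteIntegral hα (Set.inclusion hΓK) (kernelMap p K * (coordFst K ^ i * coordSnd K ^ j)) =
      0 := by
  simp only [kernelMap_mul_monomial, map_sub, map_sum, map_smul, smul_eq_mul,
    ← inducedMeasure_eq_discreteIntegral]
  rw [hbal (i + 1) (j + 1) (by omega) (by omega), sub_eq_zero]
  simp only [mul_comm]

end InteriorBalance

theorem stmt7_general (p : ℤ → ℤ → ℝ)
    (Γ : Set (ℝ × ℝ))
    (hΓU : Γ ⊆ Set.Ioo (0 : ℝ) 1 ×ˢ Set.Ioo (0 : ℝ) 1)
    (α : ℝ × ℝ → ℝ) (hα : ∀ q ∈ Γ, α q ≠ 0)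
    (hconv : AbsConv Γ α)
    (hbal : InteriorBalance p (inducedMeasure Γ α)) :
    ∀ q ∈ Γ, Qf p q.1 q.2 = 0 := by
  intro q hq
  let K := Set.Icc (0 : ℝ) 1 ×ˢ Set.Icc (0 : ℝ) 1
  have : CompactSpace K := isCompact_iff_compactSpace.mp (isCompact_Icc.prod isCompact_Icc)
  have hΓK : Γ ⊆ K := hΓU.trans (Set.prod_mono Set.Ioo_subset_Icc_self Set.Ioo_subset_Icc_self)
  have hαs := summable_norm_of_absConv
    (hΓU.trans (Set.prod_mono Set.Ioo_subset_Ico_self Set.Ioo_subset_Ico_self)) hconv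
  let e := Set.inclusion hΓK
  have hβ := (summable_mul_apply hαs e (kernelMap p K)).norm
  have hβ_zero : discreteIntegral hβ e = 0 :=
    discreteIntegral_eq_zero_of_moments_eq_zero hβ fun m n => by
      rw [discreteIntegral_mul_left hαs]
      exact discreteIntegral_kernelMap_mul_monomial_eq_zero hαs hΓK hbal m n
  exact (mul_eq_zero.mp (eq_zero_of_discreteIntegral_eq_zero hβ (Set.inclusion_injective hΓK)
    hβ_zero ⟨q, hq⟩)).resolve_left (hα q hq)

/-- If `Γ` satisfies the separation condition and the induced measure satisfies the
interior balance equations, then every geometric term in `Γ` lies on the curve `Q = 0`. -/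
theorem stmt7 (p : ℤ → ℤ → ℝ)
    (hp : ∀ s ∈ II, ∀ t ∈ II, 0 ≤ p s t)
    (hp1 : ∑ s ∈ II, ∑ t ∈ II, p s t = 1)
    (Γ : Set (ℝ × ℝ)) (hΓc : Γ.Countable)
    (hΓU : Γ ⊆ Set.Ioo (0 : ℝ) 1 ×ˢ Set.Ioo (0 : ℝ) 1)
    (α : ℝ × ℝ → ℝ) (hα : ∀ q ∈ Γ, α q ≠ 0)
    (hconv : AbsConv Γ α)
    (hsep : Separation Γ)
    (hbal : InteriorBalance p (inducedMeasure Γ α)) :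
    ∀ q ∈ Γ, Qf p q.1 q.2 = 0 :=
  stmt7_general p Γ hΓU α hα hconv hbal
end

section
/- If the induced measure m satisfies the horizontal balance equations, then B_h(r) = 0 for every r ∈ (0,1); and if m satisfies the vertical balance equations, then B_v(c) = 0 for every c ∈ (0,1). -/
open Finset

/-- The horizontal balance equations for a measure `m` on `ℕ × ℕ`. -/
def HorizontalBalance (p : ℤ → ℤ → ℝ) (h : ℤ → ℝ) (m : ℕ → ℕ → ℝ) : Prop :=
  ∀ i : ℕ, 1 ≤ i →
    m i 0 = (∑ s ∈ II, m ((i : ℤ) - s).toNat 1 * p s (-1)) +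
      ∑ s ∈ II, m ((i : ℤ) - s).toNat 0 * h s

/-- The vertical balance equations for a measure `m` on `ℕ × ℕ`. -/
def VerticalBalance (p : ℤ → ℤ → ℝ) (v : ℤ → ℝ) (m : ℕ → ℕ → ℝ) : Prop :=
  ∀ j : ℕ, 1 ≤ j →
    m 0 j = (∑ t ∈ II, m 1 ((j : ℤ) - t).toNat * p (-1) t) +
      ∑ t ∈ II, m 0 ((j : ℤ) - t).toNat * v t

/-- `B_h(r)`: the aggregate horizontal boundary balance of the terms of `Γ`
with first coordinate `r`. -/
noncomputable def Bh (p : ℤ → ℤ → ℝ) (h : ℤ → ℝ) (Γ : Set (ℝ × ℝ)) (α : ℝ × ℝ → ℝ)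
    (r : ℝ) : ℝ :=
  ∑' q : {q : ℝ × ℝ // q ∈ Γ ∧ q.1 = r},
    α q * ((∑ s ∈ II, (r ^ (1 - s).toNat * h s +
      r ^ (1 - s).toNat * (q : ℝ × ℝ).2 * p s (-1))) - r)

/-- `B_v(c)`: the aggregate vertical boundary balance of the terms of `Γ`
with second coordinate `c`. -/
noncomputable def Bv (p : ℤ → ℤ → ℝ) (v : ℤ → ℝ) (Γ : Set (ℝ × ℝ)) (α : ℝ × ℝ → ℝ)
    (c : ℝ) : ℝ :=
  ∑' q : {q : ℝ × ℝ // q ∈ Γ ∧ q.2 = c},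
    α q * ((∑ t ∈ II, (c ^ (1 - t).toNat * v t +
      (q : ℝ × ℝ).1 * c ^ (1 - t).toNat * p (-1) t)) - c)

/-!
Evaluating the horizontal balance equation at level `j + 1` on the geometric terms shows that the
family `α(ρ, σ) · D(ρ, σ)`, with `D` the boundary defect of a single term, has vanishing moments
`∑ α(ρ, σ) D(ρ, σ) ρ ^ j = 0` for every `j`. An absolutely summable family of point masses on
`[0, 1]` with vanishing moments has zero mass at every point `r`: the polynomials
`(1 - (x - r) ^ 2) ^ n` converge boundedly on `[0, 1]` to the indicator of `r`, so dominated
convergence gives `B_h(r) = 0`. The vertical equations are the horizontal ones with the two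
coordinates swapped.
-/

open Filter Topology Polynomial

section Moments

variable {ι : Type*}

lemma Summable.abs_mul_of_abs_le {a f : ι → ℝ} (ha : Summable fun i => |a i|) {C : ℝ}
    (hf : ∀ i, |f i| ≤ C) : Summable fun i => |a i * f i| :=
  (ha.mul_right C).of_nonneg_of_le (fun _ => abs_nonneg _) fun i => by
    rw [abs_mul]; exact mul_le_mul_of_nonneg_left (hf i) (abs_nonneg _)

lemma abs_pow_le_one_of_mem_Icc {x : ℝ} (hx : x ∈ Set.Icc (0 : ℝ) 1) (n : ℕ) : |x ^ n| ≤ 1 := by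
  rw [abs_of_nonneg (pow_nonneg hx.1 n)]; exact pow_le_one₀ hx.1 hx.2

variable {c ρ : ι → ℝ}

lemma tsum_mul_eval_eq_zero_of_moments_eq_zero (hρ : ∀ i, ρ i ∈ Set.Icc (0 : ℝ) 1)
    (hc : Summable fun i => |c i|) (hm : ∀ j : ℕ, ∑' i, c i * ρ i ^ j = 0) (P : ℝ[X]) :
    ∑' i, c i * P.eval (ρ i) = 0 := by
  have hsum : ∀ j : ℕ, Summable fun i => P.coeff j * (c i * ρ i ^ j) := fun j =>
    ((hc.abs_mul_of_abs_le fun i => abs_pow_le_one_of_mem_Icc (hρ i) j).of_abs).mul_left _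
  simp_rw [eval_eq_sum_range, mul_sum, mul_left_comm (c _)]
  rw [Summable.tsum_finsetSum fun j _ => hsum j]
  exact sum_eq_zero fun j _ => by rw [tsum_mul_left, hm j, mul_zero]

lemma tendsto_one_sub_sq_pow {x r : ℝ} (hx : x ∈ Set.Icc (0 : ℝ) 1) (hr : r ∈ Set.Icc (0 : ℝ) 1) :
    Tendsto (fun n : ℕ => (1 - (x - r) ^ 2) ^ n) atTop (𝓝 (if x = r then 1 else 0)) := by
  split_ifs with hxr
  · simp [hxr]
  · have hpos : 0 < (x - r) ^ 2 := by positivity [sub_ne_zero.mpr hxr]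
    exact tendsto_pow_atTop_nhds_zero_of_lt_one (by nlinarith [hx.1, hx.2, hr.1, hr.2])
      (by linarith)

lemma abs_one_sub_sq_pow_le_one {x r : ℝ} (hx : x ∈ Set.Icc (0 : ℝ) 1)
    (hr : r ∈ Set.Icc (0 : ℝ) 1) (n : ℕ) : |(1 - (x - r) ^ 2) ^ n| ≤ 1 :=
  abs_pow_le_one_of_mem_Icc
    ⟨by nlinarith [hx.1, hx.2, hr.1, hr.2], sub_le_self _ (sq_nonneg _)⟩ n

theorem tsum_subtype_eq_zero_of_moments_eq_zero (hρ : ∀ i, ρ i ∈ Set.Icc (0 : ℝ) 1)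
    (hc : Summable fun i => |c i|) (hm : ∀ j : ℕ, ∑' i, c i * ρ i ^ j = 0) {r : ℝ}
    (hr : r ∈ Set.Icc (0 : ℝ) 1) : ∑' i : {i // ρ i = r}, c i = 0 := by
  have hkernel : ∀ n : ℕ, ∑' i, c i * (1 - (ρ i - r) ^ 2) ^ n = 0 := fun n => by
    have h := tsum_mul_eval_eq_zero_of_moments_eq_zero hρ hc hm ((1 - (X - C r) ^ 2) ^ n)
    simpa only [eval_pow, eval_sub, eval_one, eval_X, eval_C] using h
  have hlim : Tendsto (fun n : ℕ => ∑' i, c i * (1 - (ρ i - r) ^ 2) ^ n) atTop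
      (𝓝 (∑' i, {i | ρ i = r}.indicator c i)) := by
    refine tendsto_tsum_of_dominated_convergence hc (fun i => ?_) (Eventually.of_forall
      fun n i => ?_)
    · convert (tendsto_one_sub_sq_pow (hρ i) hr).const_mul (c i) using 2
      by_cases h : ρ i = r <;> simp [h]
    · rw [Real.norm_eq_abs, abs_mul]
      exact mul_le_of_le_one_right (abs_nonneg _) (abs_one_sub_sq_pow_le_one (hρ i) hr n)
  exact (tsum_subtype {i | ρ i = r} c).trans
    (tendsto_nhds_unique (hlim.congr hkernel) tendsto_const_nhds)

end Moments

section BoundaryDefect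

variable {ι : Type*}

lemma sum_II {M : Type*} [AddCommMonoid M] (f : ℤ → M) : ∑ s ∈ II, f s = f (-1) + f 0 + f 1 := by
  simp [II, add_assoc]

noncomputable def geomMoment (α ρ σ : ι → ℝ) (i j : ℕ) : ℝ :=
  ∑' k, α k * ρ k ^ i * σ k ^ j

/-- On a single geometric term `ρ ^ i * σ ^ j`, the right-hand side minus the left-hand side
of the horizontal balance equation at level `i ≥ 1` is
`ρ ^ (i - 1) * boundaryDefect h (p · (-1)) ρ σ`. -/
def boundaryDefect (a b : ℤ → ℝ) (x y : ℝ) : ℝ :=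
  ∑ s ∈ II, (x ^ (1 - s).toNat * a s + x ^ (1 - s).toNat * y * b s) - x

lemma exists_abs_boundaryDefect_le (a b : ℤ → ℝ) :
    ∃ C, ∀ x ∈ Set.Icc (0 : ℝ) 1, ∀ y ∈ Set.Icc (0 : ℝ) 1, |boundaryDefect a b x y| ≤ C := by
  have hcont : Continuous fun q : ℝ × ℝ => boundaryDefect a b q.1 q.2 := by
    unfold boundaryDefect; fun_prop
  obtain ⟨C, hC⟩ := (isCompact_Icc.prod isCompact_Icc).exists_bound_of_continuousOn
    hcont.continuousOn
  exact ⟨C, fun x hx y hy => hC (x, y) ⟨hx, hy⟩⟩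

variable {α ρ σ : ι → ℝ}

lemma hasSum_geomMoment (hα : Summable fun k => |α k|) (hρ : ∀ k, ρ k ∈ Set.Icc (0 : ℝ) 1)
    (hσ : ∀ k, σ k ∈ Set.Icc (0 : ℝ) 1) (i j : ℕ) :
    HasSum (fun k => α k * ρ k ^ i * σ k ^ j) (geomMoment α ρ σ i j) := by
  have hbound : ∀ k, |ρ k ^ i * σ k ^ j| ≤ 1 := fun k => by
    rw [abs_mul]
    exact mul_le_one₀ (abs_pow_le_one_of_mem_Icc (hρ k) i) (abs_nonneg _)
      (abs_pow_le_one_of_mem_Icc (hσ k) j)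
  unfold geomMoment
  simp_rw [mul_assoc]
  exact (hα.abs_mul_of_abs_le hbound).of_abs.hasSum

lemma hasSum_mul_boundaryDefect_mul_pow (hα : Summable fun k => |α k|)
    (hρ : ∀ k, ρ k ∈ Set.Icc (0 : ℝ) 1) (hσ : ∀ k, σ k ∈ Set.Icc (0 : ℝ) 1) (a b : ℤ → ℝ)
    (j : ℕ) :
    HasSum (fun k => α k * boundaryDefect a b (ρ k) (σ k) * ρ k ^ j)
      ((∑ s ∈ II, geomMoment α ρ σ ((↑(j + 1) : ℤ) - s).toNat 1 * b s) +
        (∑ s ∈ II, geomMoment α ρ σ ((↑(j + 1) : ℤ) - s).toNat 0 * a s) -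
        geomMoment α ρ σ (j + 1) 0) := by
  have hshift : ∀ s ∈ II, ((↑(j + 1) : ℤ) - s).toNat = j + (1 - s).toNat := by
    simp only [II, mem_insert, mem_singleton]; omega
  have hsum_shift : ∀ (c : ℕ) (f : ℤ → ℝ),
      HasSum (fun k => ∑ s ∈ II, α k * ρ k ^ (j + (1 - s).toNat) * σ k ^ c * f s)
        (∑ s ∈ II, geomMoment α ρ σ ((↑(j + 1) : ℤ) - s).toNat c * f s) := fun c f => by
    rw [sum_congr rfl fun s hs => by rw [hshift s hs]]
    exact hasSum_sum fun s _ => (hasSum_geomMoment hα hρ hσ _ c).mul_right (f s)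
  refine (((hsum_shift 1 b).add (hsum_shift 0 a)).sub
    (hasSum_geomMoment hα hρ hσ (j + 1) 0)).congr_fun fun k => ?_
  simp only [boundaryDefect, sum_II, pow_add, Int.reduceNeg, Int.reduceSub, Int.reduceToNat]
  ring

theorem tsum_subtype_boundaryDefect_eq_zero (hα : Summable fun k => |α k|)
    (hρ : ∀ k, ρ k ∈ Set.Icc (0 : ℝ) 1) (hσ : ∀ k, σ k ∈ Set.Icc (0 : ℝ) 1)
    {p : ℤ → ℤ → ℝ} {h : ℤ → ℝ} (hbal : HorizontalBalance p h (geomMoment α ρ σ)) {r : ℝ}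
    (hr : r ∈ Set.Icc (0 : ℝ) 1) :
    ∑' k : {k // ρ k = r}, α k * boundaryDefect h (fun s => p s (-1)) r (σ k) = 0 := by
  obtain ⟨C, hC⟩ := exists_abs_boundaryDefect_le h (fun s => p s (-1))
  have hsum : Summable fun k => |α k * boundaryDefect h (fun s => p s (-1)) (ρ k) (σ k)| :=
    hα.abs_mul_of_abs_le fun k => hC _ (hρ k) _ (hσ k)
  have hmom : ∀ j : ℕ,
      ∑' k, α k * boundaryDefect h (fun s => p s (-1)) (ρ k) (σ k) * ρ k ^ j = 0 := fun j => by
    rw [(hasSum_mul_boundaryDefect_mul_pow hα hρ hσ _ _ j).tsum_eq, ← hbal (j + 1) (by omega),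
      sub_self]
  rw [← tsum_subtype_eq_zero_of_moments_eq_zero hρ hsum hmom hr]
  exact tsum_congr fun k => by rw [k.2]

end BoundaryDefect

lemma tsum_subtype_mem_and {β M : Type*} [AddCommMonoid M] [TopologicalSpace M] (Γ : Set β)
    (P : β → Prop) (f : β → M) :
    ∑' q : {q // q ∈ Γ ∧ P q}, f q = ∑' k : {k : Γ // P k}, f k :=
  ((Equiv.subtypeSubtypeEquivSubtypeInter (· ∈ Γ) P).tsum_eq (fun q => f q)).symm

lemma Bh_eq_tsum_boundaryDefect (p : ℤ → ℤ → ℝ) (h : ℤ → ℝ) (Γ : Set (ℝ × ℝ))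
    (α : ℝ × ℝ → ℝ) (r : ℝ) :
    Bh p h Γ α r = ∑' k : {k : Γ // (k : ℝ × ℝ).1 = r},
      α k * boundaryDefect h (fun s => p s (-1)) r (k : ℝ × ℝ).2 :=
  tsum_subtype_mem_and Γ (fun q => q.1 = r) fun q =>
    α q * boundaryDefect h (fun s => p s (-1)) r q.2

lemma Bv_eq_tsum_boundaryDefect (p : ℤ → ℤ → ℝ) (v : ℤ → ℝ) (Γ : Set (ℝ × ℝ))
    (α : ℝ × ℝ → ℝ) (c : ℝ) :
    Bv p v Γ α c = ∑' k : {k : Γ // (k : ℝ × ℝ).2 = c},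
      α k * boundaryDefect v (p (-1)) c (k : ℝ × ℝ).1 := by
  refine .trans (tsum_congr fun q => ?_) (tsum_subtype_mem_and Γ (fun q => q.2 = c) fun q =>
    α q * boundaryDefect v (p (-1)) c q.1)
  simp only [boundaryDefect, mul_comm (q : ℝ × ℝ).1]

lemma summable_abs_of_absConv {Γ : Set (ℝ × ℝ)} {α : ℝ × ℝ → ℝ}
    (hΓU : Γ ⊆ Set.Ioo (0 : ℝ) 1 ×ˢ Set.Ioo (0 : ℝ) 1) (hconv : AbsConv Γ α) :
    Summable fun q : Γ => |α q| :=
  hconv.of_nonneg_of_le (fun _ => abs_nonneg _) fun q => by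
    obtain ⟨⟨hρ0, hρ1⟩, ⟨hσ0, hσ1⟩⟩ := hΓU q.2
    rw [mul_assoc]
    refine le_mul_of_one_le_right (abs_nonneg _) (one_le_mul_of_one_le_of_one_le ?_ ?_)
    · exact (one_le_inv₀ (by linarith)).2 (by linarith)
    · exact (one_le_inv₀ (by linarith)).2 (by linarith)

lemma verticalBalance_iff_horizontalBalance_swap (p : ℤ → ℤ → ℝ) (v : ℤ → ℝ)
    (m : ℕ → ℕ → ℝ) :
    VerticalBalance p v m ↔ HorizontalBalance (fun s t => p t s) v (fun i j => m j i) :=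
  Iff.rfl

lemma inducedMeasure_swap_eq_geomMoment (Γ : Set (ℝ × ℝ)) (α : ℝ × ℝ → ℝ) :
    (fun i j => inducedMeasure Γ α j i) =
      geomMoment (fun q : Γ => α q) (fun q => (q : ℝ × ℝ).2) (fun q => (q : ℝ × ℝ).1) := by
  funext i j
  exact tsum_congr fun q => mul_right_comm _ _ _

theorem stmt8_general (p : ℤ → ℤ → ℝ) (h : ℤ → ℝ) (v : ℤ → ℝ) (Γ : Set (ℝ × ℝ))
    (hΓU : Γ ⊆ Set.Ioo (0 : ℝ) 1 ×ˢ Set.Ioo (0 : ℝ) 1) (α : ℝ × ℝ → ℝ)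
    (hconv : AbsConv Γ α) :
    (HorizontalBalance p h (inducedMeasure Γ α) →
      ∀ r ∈ Set.Ioo (0 : ℝ) 1, Bh p h Γ α r = 0) ∧
    (VerticalBalance p v (inducedMeasure Γ α) →
      ∀ c ∈ Set.Ioo (0 : ℝ) 1, Bv p v Γ α c = 0) := by
  have hsum := summable_abs_of_absConv hΓU hconv
  have hfst : ∀ q : Γ, (q : ℝ × ℝ).1 ∈ Set.Icc (0 : ℝ) 1 :=
    fun q => Set.Ioo_subset_Icc_self (hΓU q.2).1
  have hsnd : ∀ q : Γ, (q : ℝ × ℝ).2 ∈ Set.Icc (0 : ℝ) 1 :=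
    fun q => Set.Ioo_subset_Icc_self (hΓU q.2).2
  refine ⟨fun hbal r hr => ?_, fun hbal c hc => ?_⟩
  · rw [Bh_eq_tsum_boundaryDefect]
    exact tsum_subtype_boundaryDefect_eq_zero hsum hfst hsnd hbal (Set.Ioo_subset_Icc_self hr)
  · rw [verticalBalance_iff_horizontalBalance_swap, inducedMeasure_swap_eq_geomMoment] at hbal
    rw [Bv_eq_tsum_boundaryDefect]
    exact tsum_subtype_boundaryDefect_eq_zero hsum hsnd hfst hbal (Set.Ioo_subset_Icc_self hc)

/-- If the induced measure satisfies the horizontal (resp. vertical) balance equations,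
then `B_h(r) = 0` for every `r ∈ (0,1)` (resp. `B_v(c) = 0` for every `c ∈ (0,1)`). -/
theorem stmt8 (p : ℤ → ℤ → ℝ)
    (hp : ∀ s ∈ II, ∀ t ∈ II, 0 ≤ p s t)
    (hp1 : ∑ s ∈ II, ∑ t ∈ II, p s t = 1)
    (h : ℤ → ℝ) (hh : ∀ s ∈ II, 0 ≤ h s)
    (hh1 : h (-1) + h 0 + h 1 + p (-1) 1 + p 0 1 + p 1 1 = 1)
    (v : ℤ → ℝ) (hv : ∀ t ∈ II, 0 ≤ v t)
    (hv1 : v (-1) + v 0 + v 1 + p 1 (-1) + p 1 0 + p 1 1 = 1)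
    (Γ : Set (ℝ × ℝ)) (hΓc : Γ.Countable)
    (hΓU : Γ ⊆ Set.Ioo (0 : ℝ) 1 ×ˢ Set.Ioo (0 : ℝ) 1)
    (α : ℝ × ℝ → ℝ) (hα : ∀ q ∈ Γ, α q ≠ 0)
    (hconv : AbsConv Γ α) :
    (HorizontalBalance p h (inducedMeasure Γ α) →
      ∀ r ∈ Set.Ioo (0 : ℝ) 1, Bh p h Γ α r = 0) ∧
    (VerticalBalance p v (inducedMeasure Γ α) →
      ∀ c ∈ Set.Ioo (0 : ℝ) 1, Bv p v Γ α c = 0) :=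
  stmt8_general p h v Γ hΓU α hconv
end

section
/- Suppose every (ρ,σ) ∈ Γ satisfies Q(ρ,σ) = 0, B_h(r) = 0 for every r ∈ (0,1), and B_v(c) = 0 for every c ∈ (0,1). Then the induced measure m satisfies the interior balance equations, the horizontal balance equations and the vertical balance equations. -/
open Finset

lemma summable_aux {Γ : Set (ℝ × ℝ)} {α : ℝ × ℝ → ℝ}
    (hΓU : Γ ⊆ Set.Ioo (0 : ℝ) 1 ×ˢ Set.Ioo (0 : ℝ) 1) (hconv : AbsConv Γ α)
    (i j : ℕ) : Summable (fun q : Γ => α q * (q : ℝ × ℝ).1 ^ i * (q : ℝ × ℝ).2 ^ j) := by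
  apply Summable.of_abs
  apply Summable.of_nonneg_of_le (fun q => abs_nonneg _) _ hconv
  intro q
  obtain ⟨⟨h1, h2⟩, h3, h4⟩ := hΓU q.2
  have e1 : (0:ℝ) < 1 - (q : ℝ × ℝ).1 := by linarith
  have e2 : (0:ℝ) < 1 - (q : ℝ × ℝ).2 := by linarith
  have i1 : (1:ℝ) ≤ (1 - (q : ℝ × ℝ).1)⁻¹ := by
    rw [le_inv_comm₀ one_pos e1]; linarith
  have i2 : (1:ℝ) ≤ (1 - (q : ℝ × ℝ).2)⁻¹ := by
    rw [le_inv_comm₀ one_pos e2]; linarith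
  rw [abs_mul, abs_mul, abs_pow, abs_pow, abs_of_pos h1, abs_of_pos h3]
  calc |α q| * (q:ℝ×ℝ).1 ^ i * (q:ℝ×ℝ).2 ^ j ≤ |α q| * 1 * 1 := by
        gcongr
        · exact pow_le_one₀ h1.le h2.le
        · exact pow_le_one₀ h3.le h4.le
    _ ≤ |α q| * (1 - (q:ℝ×ℝ).1)⁻¹ * (1 - (q:ℝ×ℝ).2)⁻¹ := by
        gcongr

/-- If every term of `Γ` lies on `Q = 0` and all the aggregate boundary balances vanish,
then the induced measure satisfies the interior, horizontal and vertical balance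
equations. -/
theorem stmt9 (p : ℤ → ℤ → ℝ)
    (hp : ∀ s ∈ II, ∀ t ∈ II, 0 ≤ p s t)
    (hp1 : ∑ s ∈ II, ∑ t ∈ II, p s t = 1)
    (h : ℤ → ℝ) (hh : ∀ s ∈ II, 0 ≤ h s)
    (hh1 : h (-1) + h 0 + h 1 + p (-1) 1 + p 0 1 + p 1 1 = 1)
    (v : ℤ → ℝ) (hv : ∀ t ∈ II, 0 ≤ v t)
    (hv1 : v (-1) + v 0 + v 1 + p 1 (-1) + p 1 0 + p 1 1 = 1)
    (Γ : Set (ℝ × ℝ)) (hΓc : Γ.Countable)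
    (hΓU : Γ ⊆ Set.Ioo (0 : ℝ) 1 ×ˢ Set.Ioo (0 : ℝ) 1)
    (α : ℝ × ℝ → ℝ) (hα : ∀ q ∈ Γ, α q ≠ 0)
    (hconv : AbsConv Γ α)
    (hQ : ∀ q ∈ Γ, Qf p q.1 q.2 = 0)
    (hBh : ∀ r ∈ Set.Ioo (0 : ℝ) 1, Bh p h Γ α r = 0)
    (hBv : ∀ c ∈ Set.Ioo (0 : ℝ) 1, Bv p v Γ α c = 0) :
    InteriorBalance p (inducedMeasure Γ α) ∧
    HorizontalBalance p h (inducedMeasure Γ α) ∧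
    VerticalBalance p v (inducedMeasure Γ α) := by
  have S := summable_aux hΓU hconv
  have key : ∀ (m n : ℕ), inducedMeasure Γ α m n = ∑' q : Γ, α q * (q:ℝ×ℝ).1^m * (q:ℝ×ℝ).2^n :=
    fun _ _ => rfl
  have etn : ∀ (a : ℕ), ∀ s ∈ II, ((↑(a+1) : ℤ) - s).toNat = a + (1 - s).toNat := by
    intro a s hs
    simp only [II, Finset.mem_insert, Finset.mem_singleton] at hs
    rcases hs with rfl|rfl|rfl <;> omega
  refine ⟨?_, ?_, ?_⟩
  · -- Interior balance
    intro i j hi hj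
    obtain ⟨a, rfl⟩ := Nat.exists_eq_add_of_le' hi
    obtain ⟨b, rfl⟩ := Nat.exists_eq_add_of_le' hj
    refine Eq.symm ?_
    calc ∑ s ∈ II, ∑ t ∈ II,
          inducedMeasure Γ α ((↑(a+1) - s).toNat) ((↑(b+1) - t).toNat) * p s t
        = ∑ s ∈ II, ∑ t ∈ II, ∑' q : Γ,
          (α q * (q:ℝ×ℝ).1 ^ (a + (1-s).toNat) * (q:ℝ×ℝ).2 ^ (b + (1-t).toNat)) * p s t := by
          refine Finset.sum_congr rfl fun s hs => Finset.sum_congr rfl fun t ht => ?_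
          rw [etn a s hs, etn b t ht, key, tsum_mul_right]
      _ = ∑' q : Γ, ∑ s ∈ II, ∑ t ∈ II,
          (α q * (q:ℝ×ℝ).1 ^ (a + (1-s).toNat) * (q:ℝ×ℝ).2 ^ (b + (1-t).toNat)) * p s t := by
          rw [Summable.tsum_finsetSum (fun s hs => summable_sum (fun t ht => (S _ _).mul_right _))]
          exact Finset.sum_congr rfl fun s hs =>
            (Summable.tsum_finsetSum (fun t ht => (S _ _).mul_right _)).symm
      _ = ∑' q : Γ, α q * (q:ℝ×ℝ).1 ^ (a+1) * (q:ℝ×ℝ).2 ^ (b+1) := by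
          refine tsum_congr fun q => ?_
          have hq := hQ q.1 q.2
          simp only [Qf, II, Finset.sum_insert, Finset.mem_insert, Finset.mem_singleton,
            Finset.sum_singleton] at hq ⊢
          norm_num at hq ⊢
          linear_combination ((α q : ℝ) * (q:ℝ×ℝ).1 ^ a * (q:ℝ×ℝ).2 ^ b) * hq
      _ = inducedMeasure Γ α (a+1) (b+1) := (key _ _).symm
  · -- Horizontal balance
    intro i hi
    obtain ⟨a, rfl⟩ := Nat.exists_eq_add_of_le' hi
    set G : Γ → ℝ := fun q => (q:ℝ×ℝ).1^a *
      (α q * ((∑ s ∈ II, ((q:ℝ×ℝ).1 ^ (1-s).toNat * h s +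
        (q:ℝ×ℝ).1 ^ (1-s).toNat * (q:ℝ×ℝ).2 * p s (-1))) - (q:ℝ×ℝ).1)) with hGdef
    have hGalt : G = fun q : Γ =>
        ((∑ s ∈ II, (α q * (q:ℝ×ℝ).1^(a+(1-s).toNat) * (q:ℝ×ℝ).2^0) * h s) +
         (∑ s ∈ II, (α q * (q:ℝ×ℝ).1^(a+(1-s).toNat) * (q:ℝ×ℝ).2^1) * p s (-1))) -
        (α q * (q:ℝ×ℝ).1^(a+1) * (q:ℝ×ℝ).2^0) := by
      funext q
      simp only [hGdef, II, Finset.sum_insert, Finset.mem_insert, Finset.mem_singleton,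
        Finset.sum_singleton]
      norm_num
      ring
    have hsG : Summable G := by
      rw [hGalt]
      exact ((summable_sum (fun s _ => (S _ _).mul_right _)).add
        (summable_sum (fun s _ => (S _ _).mul_right _))).sub (S _ _)
    have hfib : ∀ r : ℝ, ∑' x : ((fun q : Γ => (q:ℝ×ℝ).1) ⁻¹' {r}), G x = 0 := by
      intro r
      let e : ((fun q : Γ => (q:ℝ×ℝ).1) ⁻¹' {r}) ≃ {q : ℝ × ℝ // q ∈ Γ ∧ q.1 = r} :=
        { toFun := fun x => ⟨(x : Γ), (x : Γ).2, x.2⟩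
          invFun := fun y => ⟨⟨y.1, y.2.1⟩, y.2.2⟩
          left_inv := fun x => rfl
          right_inv := fun y => rfl }
      rw [← e.symm.tsum_eq]
      have hfun : (fun y : {q : ℝ × ℝ // q ∈ Γ ∧ q.1 = r} => G (e.symm y)) =
          fun y : {q : ℝ × ℝ // q ∈ Γ ∧ q.1 = r} =>
            r^a * (α y * ((∑ s ∈ II, (r ^ (1-s).toNat * h s +
            r ^ (1-s).toNat * (y : ℝ × ℝ).2 * p s (-1))) - r)) := by
        funext y
        obtain ⟨⟨y1, y2⟩, hyΓ, hyr⟩ := y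
        simp only at hyr
        subst hyr
        rw [hGdef]; rfl
      rw [hfun, tsum_mul_left]
      rcases isEmpty_or_nonempty {q : ℝ × ℝ // q ∈ Γ ∧ q.1 = r} with hE | hN
      · rw [tsum_empty, mul_zero]
      · obtain ⟨y⟩ := hN
        have hr : r ∈ Set.Ioo (0:ℝ) 1 := y.2.2 ▸ (hΓU y.2.1).1
        have hz : Bh p h Γ α r = 0 := hBh r hr
        rw [Bh] at hz
        rw [hz, mul_zero]
    have hG0 : ∑' q : Γ, G q = 0 := by
      have h2 := hsG.hasSum.tsum_fiberwise (fun q : Γ => (q:ℝ×ℝ).1)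
      rw [show (fun r : ℝ => ∑' x : ((fun q : Γ => (q:ℝ×ℝ).1) ⁻¹' {r}), G x) = fun _ => 0 from
        funext hfib] at h2
      exact (h2.unique hasSum_zero).symm ▸ rfl
    refine Eq.symm ?_
    calc (∑ s ∈ II, inducedMeasure Γ α ((↑(a+1) - s).toNat) 1 * p s (-1)) +
          ∑ s ∈ II, inducedMeasure Γ α ((↑(a+1) - s).toNat) 0 * h s
        = (∑ s ∈ II, ∑' q : Γ, (α q * (q:ℝ×ℝ).1^(a+(1-s).toNat) * (q:ℝ×ℝ).2^1) * p s (-1)) +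
          ∑ s ∈ II, ∑' q : Γ, (α q * (q:ℝ×ℝ).1^(a+(1-s).toNat) * (q:ℝ×ℝ).2^0) * h s := by
          congr 1 <;> refine Finset.sum_congr rfl fun s hs => ?_ <;>
            rw [etn a s hs, key, tsum_mul_right]
      _ = ∑' q : Γ, ((∑ s ∈ II, (α q * (q:ℝ×ℝ).1^(a+(1-s).toNat) * (q:ℝ×ℝ).2^1) * p s (-1)) +
          ∑ s ∈ II, (α q * (q:ℝ×ℝ).1^(a+(1-s).toNat) * (q:ℝ×ℝ).2^0) * h s) := by
          rw [Summable.tsum_add (summable_sum (fun s _ => (S _ _).mul_right _))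
            (summable_sum (fun s _ => (S _ _).mul_right _)),
            Summable.tsum_finsetSum (fun s _ => (S _ _).mul_right _),
            Summable.tsum_finsetSum (fun s _ => (S _ _).mul_right _)]
      _ = ∑' q : Γ, (α q * (q:ℝ×ℝ).1^(a+1) * (q:ℝ×ℝ).2^0 + G q) := by
          refine tsum_congr fun q => ?_
          simp only [hGdef, II, Finset.sum_insert, Finset.mem_insert, Finset.mem_singleton,
            Finset.sum_singleton]
          norm_num
          ring
      _ = inducedMeasure Γ α (a+1) 0 + ∑' q : Γ, G q := by
          rw [Summable.tsum_add (S _ _) hsG]; rfl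
      _ = inducedMeasure Γ α (a+1) 0 := by rw [hG0, add_zero]
  · -- Vertical balance
    intro j hj
    obtain ⟨b, rfl⟩ := Nat.exists_eq_add_of_le' hj
    set G : Γ → ℝ := fun q => (q:ℝ×ℝ).2^b *
      (α q * ((∑ t ∈ II, ((q:ℝ×ℝ).2 ^ (1-t).toNat * v t +
        (q:ℝ×ℝ).1 * (q:ℝ×ℝ).2 ^ (1-t).toNat * p (-1) t)) - (q:ℝ×ℝ).2)) with hGdef
    have hGalt : G = fun q : Γ =>
        ((∑ t ∈ II, (α q * (q:ℝ×ℝ).1^0 * (q:ℝ×ℝ).2^(b+(1-t).toNat)) * v t) +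
         (∑ t ∈ II, (α q * (q:ℝ×ℝ).1^1 * (q:ℝ×ℝ).2^(b+(1-t).toNat)) * p (-1) t)) -
        (α q * (q:ℝ×ℝ).1^0 * (q:ℝ×ℝ).2^(b+1)) := by
      funext q
      simp only [hGdef, II, Finset.sum_insert, Finset.mem_insert, Finset.mem_singleton,
        Finset.sum_singleton]
      norm_num
      ring
    have hsG : Summable G := by
      rw [hGalt]
      exact ((summable_sum (fun t _ => (S _ _).mul_right _)).add
        (summable_sum (fun t _ => (S _ _).mul_right _))).sub (S _ _)
    have hfib : ∀ c : ℝ, ∑' x : ((fun q : Γ => (q:ℝ×ℝ).2) ⁻¹' {c}), G x = 0 := by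
      intro c
      let e : ((fun q : Γ => (q:ℝ×ℝ).2) ⁻¹' {c}) ≃ {q : ℝ × ℝ // q ∈ Γ ∧ q.2 = c} :=
        { toFun := fun x => ⟨(x : Γ), (x : Γ).2, x.2⟩
          invFun := fun y => ⟨⟨y.1, y.2.1⟩, y.2.2⟩
          left_inv := fun x => rfl
          right_inv := fun y => rfl }
      rw [← e.symm.tsum_eq]
      have hfun : (fun y : {q : ℝ × ℝ // q ∈ Γ ∧ q.2 = c} => G (e.symm y)) =
          fun y : {q : ℝ × ℝ // q ∈ Γ ∧ q.2 = c} =>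
            c^b * (α y * ((∑ t ∈ II, (c ^ (1-t).toNat * v t +
            (y : ℝ × ℝ).1 * c ^ (1-t).toNat * p (-1) t)) - c)) := by
        funext y
        obtain ⟨⟨y1, y2⟩, hyΓ, hyc⟩ := y
        simp only at hyc
        subst hyc
        rw [hGdef]; rfl
      rw [hfun, tsum_mul_left]
      rcases isEmpty_or_nonempty {q : ℝ × ℝ // q ∈ Γ ∧ q.2 = c} with hE | hN
      · rw [tsum_empty, mul_zero]
      · obtain ⟨y⟩ := hN
        have hc : c ∈ Set.Ioo (0:ℝ) 1 := y.2.2 ▸ (hΓU y.2.1).2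
        have hz : Bv p v Γ α c = 0 := hBv c hc
        rw [Bv] at hz
        rw [hz, mul_zero]
    have hG0 : ∑' q : Γ, G q = 0 := by
      have h2 := hsG.hasSum.tsum_fiberwise (fun q : Γ => (q:ℝ×ℝ).2)
      rw [show (fun c : ℝ => ∑' x : ((fun q : Γ => (q:ℝ×ℝ).2) ⁻¹' {c}), G x) = fun _ => 0 from
        funext hfib] at h2
      exact (h2.unique hasSum_zero).symm ▸ rfl
    refine Eq.symm ?_
    calc (∑ t ∈ II, inducedMeasure Γ α 1 ((↑(b+1) - t).toNat) * p (-1) t) +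
          ∑ t ∈ II, inducedMeasure Γ α 0 ((↑(b+1) - t).toNat) * v t
        = (∑ t ∈ II, ∑' q : Γ, (α q * (q:ℝ×ℝ).1^1 * (q:ℝ×ℝ).2^(b+(1-t).toNat)) * p (-1) t) +
          ∑ t ∈ II, ∑' q : Γ, (α q * (q:ℝ×ℝ).1^0 * (q:ℝ×ℝ).2^(b+(1-t).toNat)) * v t := by
          congr 1 <;> refine Finset.sum_congr rfl fun t ht => ?_ <;>
            rw [etn b t ht, key, tsum_mul_right]
      _ = ∑' q : Γ, ((∑ t ∈ II, (α q * (q:ℝ×ℝ).1^1 * (q:ℝ×ℝ).2^(b+(1-t).toNat)) * p (-1) t) +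
          ∑ t ∈ II, (α q * (q:ℝ×ℝ).1^0 * (q:ℝ×ℝ).2^(b+(1-t).toNat)) * v t) := by
          rw [Summable.tsum_add (summable_sum (fun t _ => (S _ _).mul_right _))
            (summable_sum (fun t _ => (S _ _).mul_right _)),
            Summable.tsum_finsetSum (fun t _ => (S _ _).mul_right _),
            Summable.tsum_finsetSum (fun t _ => (S _ _).mul_right _)]
      _ = ∑' q : Γ, (α q * (q:ℝ×ℝ).1^0 * (q:ℝ×ℝ).2^(b+1) + G q) := by
          refine tsum_congr fun q => ?_
          simp only [hGdef, II, Finset.sum_insert, Finset.mem_insert, Finset.mem_singleton,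
            Finset.sum_singleton]
          norm_num
          ring
      _ = inducedMeasure Γ α 0 (b+1) + ∑' q : Γ, G q := by
          rw [Summable.tsum_add (S _ _) hsG]; rfl
      _ = inducedMeasure Γ α 0 (b+1) := by rw [hG0, add_zero]
end
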